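/- arXiv:1206.0219 — 2 statements merged into one kernel-verified Lean document; each statement's English description precedes it below -/
import Mathlib

section
/- Let δ be a Young diagram of height < r, and let δ_0 = δ, δ_1, δ_2, … and s_k be produced by the staircase algorithm, where s_k is the total number of boxes added after k stages, i.e. s_k = |δ_k| − |δ_0|. Then each δ_k is a valid Young diagram (non-increasing row lengths), and the height of δ_k equals r for every k ≥ 1. -/
/-- `colHt f j` : height of the `j`-th column (`j ≥ 1`) of the Young diagram with
0-indexed row lengths `f`, i.e. the number of rows of length at least `j`. -/
noncomputable def colHt (f : ℕ → ℕ) (j : ℕ) : ℕ := sInf {i | f i < j}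

/-- Add boxes to column `k` so that rows `0,…,t-1` reach length at least `k`,
i.e. the `k`-th column reaches height `t`. -/
def addCol (f : ℕ → ℕ) (k t : ℕ) : ℕ → ℕ :=
  fun i => if i < t then max (f i) k else f i

/-- The staircase algorithm with parameter `r` applied to a Young diagram `f` of
height `< r`: stage 1 adds boxes to the first column until it reaches height `r`;
stage `k ≥ 2` adds boxes to the `k`-th column until its height is one more than the
height of the `(k-1)`-th column of the starting diagram. `staircase r f k` is `δ_k`. -/
noncomputable def staircase (r : ℕ) (f : ℕ → ℕ) : ℕ → ℕ → ℕ
  | 0 => f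
  | k + 1 => addCol (staircase r f k) (k + 1) (if k = 0 then r else colHt f k + 1)

/-!
Each stage only raises rows `0, …, t-1` to length at least `k`, so it preserves the Young
property as soon as every row from `t` on already has length at most `k`. For the first stage
this holds because `δ_0` vanishes from row `r` on; for stage `k + 1 ≥ 2` the rows below the
`k`-th column of `δ_0` are shorter than `k` in `δ_0`, and the first `k` stages never push a row
beyond length `k`. The height is `r` because stage 1 fills the first column up to row `r - 1`,
later stages never shrink rows, and no stage reaches row `r` since every threshold is at most `r`.
-/

section addCol

variable {f : ℕ → ℕ} {k t i : ℕ}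

lemma le_addCol : f i ≤ addCol f k t i := by
  unfold addCol; split_ifs <;> simp

lemma addCol_le_max : addCol f k t i ≤ max (f i) k := by
  unfold addCol; split_ifs <;> simp

lemma addCol_of_le (h : t ≤ i) : addCol f k t i = f i :=
  if_neg (not_lt.2 h)

lemma le_addCol_of_lt (h : i < t) : k ≤ addCol f k t i := by
  simp [addCol, h]

lemma addCol_antitone (hf : Antitone f) (hk : ∀ j, t ≤ j → f j ≤ k) :
    Antitone (addCol f k t) := by
  intro i j hij
  by_cases hj : j < t
  · simp only [addCol, hj, lt_of_le_of_lt hij hj, if_true]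
    exact max_le_max (hf hij) le_rfl
  · rw [addCol_of_le (not_lt.1 hj)]
    by_cases hi : i < t
    · exact (hk j (not_lt.1 hj)).trans (le_addCol_of_lt hi)
    · exact (hf hij).trans_eq (addCol_of_le (not_lt.1 hi)).symm

end addCol

lemma colHt_le {f : ℕ → ℕ} {j i : ℕ} (h : f i < j) : colHt f j ≤ i :=
  Nat.sInf_le h

lemma lt_of_colHt_le {f : ℕ → ℕ} (hf : Antitone f) {j i : ℕ} (hne : ∃ i, f i < j)
    (h : colHt f j ≤ i) : f i < j :=
  (hf h).trans_lt (Nat.sInf_mem hne)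

section staircase

variable {r : ℕ} {f : ℕ → ℕ} {k i : ℕ}

lemma staircase_monotone_stage : Monotone fun k => staircase r f k i :=
  monotone_nat_of_le_succ fun _ => le_addCol

lemma staircase_le_max : staircase r f k i ≤ max (f i) k := by
  induction k with
  | zero => exact le_max_left _ _
  | succ k ih => exact addCol_le_max.trans (max_le (ih.trans (max_le_max le_rfl k.le_succ)) (le_max_right _ _))

lemma staircase_pos (hk : 1 ≤ k) (hi : i < r) : 0 < staircase r f k i :=
  (le_addCol_of_lt hi).trans (staircase_monotone_stage hk)

lemma staircase_threshold_le (hr : 1 ≤ r) (hf : f (r - 1) = 0) :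
    (if k = 0 then r else colHt f k + 1) ≤ r := by
  split_ifs with hk
  · exact le_rfl
  · have := colHt_le (j := k) (hf ▸ Nat.pos_of_ne_zero hk)
    omega

lemma staircase_eq_zero (hr : 1 ≤ r) (hf : f (r - 1) = 0) (hz : ∀ i, r ≤ i → f i = 0)
    (hi : r ≤ i) : staircase r f k i = 0 := by
  induction k with
  | zero => exact hz i hi
  | succ k ih => exact (addCol_of_le ((staircase_threshold_le hr hf).trans hi)).trans ih

lemma staircase_antitone (hf : Antitone f) (hz : ∀ i, r ≤ i → f i = 0) :
    Antitone (staircase r f k) := by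
  induction k with
  | zero => exact hf
  | succ k ih =>
    refine addCol_antitone ih fun j hj => ?_
    split_ifs at hj with hk
    · subst hk
      simp [staircase, hz j hj]
    · have hfj : f j < k := lt_of_colHt_le hf ⟨r, by rw [hz r le_rfl]; omega⟩ (by omega)
      exact staircase_le_max.trans (by omega)

end staircase

/-- Each diagram `δ_k` produced by the staircase algorithm is a valid Young diagram
(non-increasing row lengths), and for `k ≥ 1` the height of `δ_k` (the number of
nonzero rows, computed as `sInf {i | δ_k i = 0}`) equals `r`. -/
theorem stmt3 (r : ℕ) (f : ℕ → ℕ) (hr : 1 ≤ r)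
    (hmono : ∀ i j, i ≤ j → f j ≤ f i)
    (hht : ∀ i, r - 1 ≤ i → f i = 0) :
    (∀ k, ∀ i j, i ≤ j → staircase r f k j ≤ staircase r f k i) ∧
      (∀ k, 1 ≤ k → sInf {i | staircase r f k i = 0} = r) := by
  have hz : ∀ i, r ≤ i → f i = 0 := fun i hi => hht i (by omega)
  refine ⟨fun k i j hij => staircase_antitone (fun i j => hmono i j) hz hij, fun k hk => ?_⟩
  exact IsLeast.csInf_eq ⟨staircase_eq_zero hr (hht _ le_rfl) hz le_rfl,
    fun i hi => not_lt.1 fun h => (staircase_pos hk h).ne' hi⟩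
end

section
/- Let δ be a Young diagram of height < r and width ≤ d − r + 1 where 0 < r ≤ d, and let s_k be the number of boxes added after k stages of the staircase algorithm applied to δ with parameter r. Then s_{d−r+1} ≤ d and s_{d−r+2} > d. -/
open Finset

lemma lt_colHt_iff {f : ℕ → ℕ} (hf : Antitone f) {m : ℕ} (hm : ∃ j, f j < m) (i : ℕ) :
    i < colHt f m ↔ m ≤ f i := by
  constructor
  · intro hi
    by_contra! hfi
    exact (Nat.sInf_le (s := {i | f i < m}) hfi).not_gt hi
  · intro hfi
    by_contra! hi
    exact (hf hi).trans_lt (Nat.sInf_mem (s := {i | f i < m}) hm) |>.not_ge hfi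

lemma staircase_succ_apply_zero {r : ℕ} (f : ℕ → ℕ) (hr : 0 < r) (n : ℕ) :
    staircase r f (n + 1) 0 = max (f 0) (n + 1) := by
  induction n with
  | zero => simp [staircase, addCol, hr]
  | succ n ih =>
    simp only [staircase, addCol, if_neg n.succ_ne_zero, Nat.succ_pos, if_true] at ih ⊢
    rw [ih]
    omega

lemma staircase_succ_apply_succ {r : ℕ} {f : ℕ → ℕ} (hf : Antitone f) (hfin : ∃ j, f j = 0)
    {i : ℕ} (hi : i + 1 < r) (n : ℕ) :
    staircase r f (n + 1) (i + 1) = max (f (i + 1)) (min (n + 1) (f i + 1)) := by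
  induction n with
  | zero => simp [staircase, addCol, hi]
  | succ n ih =>
    obtain ⟨j, hj⟩ := hfin
    have hcol := lt_colHt_iff hf (m := n + 1) ⟨j, by omega⟩ i
    have : f (i + 1) ≤ f i := hf (Nat.le_add_right i 1)
    simp only [staircase, addCol, if_neg n.succ_ne_zero, Nat.add_lt_add_iff_right] at ih ⊢
    rw [ih]
    split_ifs <;> omega

lemma staircase_succ_apply_succ_le {r : ℕ} {f : ℕ → ℕ} (hf : Antitone f) (hfin : ∃ j, f j = 0)
    {i : ℕ} (hi : i + 1 < r) (n : ℕ) :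
    staircase r f (n + 1) (i + 1) ≤ f i + 1 := by
  rw [staircase_succ_apply_succ hf hfin hi]
  have : f (i + 1) ≤ f i := hf (Nat.le_add_right i 1)
  omega

lemma staircase_succ_apply_succ_of_le {r : ℕ} {f : ℕ → ℕ} (hf : Antitone f)
    (hfin : ∃ j, f j = 0) {i : ℕ} (hi : i + 1 < r) {n : ℕ} (hn : f 0 ≤ n) :
    staircase r f (n + 1) (i + 1) = f i + 1 := by
  rw [staircase_succ_apply_succ hf hfin hi]
  have : f (i + 1) ≤ f i := hf (Nat.le_add_right i 1)
  have : f i ≤ f 0 := hf i.zero_le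
  omega

lemma sum_staircase_succ_le {r : ℕ} {f : ℕ → ℕ} (hf : Antitone f) (hfr : f r = 0) {n : ℕ}
    (hn : f 0 ≤ n + 1) :
    ∑ i ∈ range (r + 1), staircase (r + 1) f (n + 1) i ≤ ∑ i ∈ range (r + 1), f i + n + r + 1 := by
  rw [sum_range_succ', staircase_succ_apply_zero f r.succ_pos, sum_range_succ, hfr, add_zero]
  calc ∑ i ∈ range r, staircase (r + 1) f (n + 1) (i + 1) + max (f 0) (n + 1)
      ≤ ∑ i ∈ range r, (f i + 1) + (n + 1) := by
        gcongr with i hi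
        · exact staircase_succ_apply_succ_le hf ⟨r, hfr⟩ (by simpa using hi) n
        · exact max_le hn le_rfl
    _ = ∑ i ∈ range r, f i + n + r + 1 := by
        rw [sum_add_distrib, sum_const, card_range, smul_eq_mul, mul_one]
        ring

lemma sum_staircase_succ_eq {r : ℕ} {f : ℕ → ℕ} (hf : Antitone f) (hfr : f r = 0) {n : ℕ}
    (hn : f 0 ≤ n) :
    ∑ i ∈ range (r + 1), staircase (r + 1) f (n + 1) i = ∑ i ∈ range (r + 1), f i + n + r + 1 := by
  rw [sum_range_succ', staircase_succ_apply_zero f r.succ_pos, sum_range_succ, hfr, add_zero,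
    max_eq_right (by omega), sum_congr rfl fun i hi =>
      staircase_succ_apply_succ_of_le hf ⟨r, hfr⟩ (by simpa using hi) hn,
    sum_add_distrib, sum_const, card_range, smul_eq_mul, mul_one]
  ring

/-- With `s_k = |δ_k| - |δ|` the number of boxes added after `k` stages of the
staircase algorithm (for `δ` of height `< r` and width `≤ d - r + 1`, `0 < r ≤ d`),
one has `s_{d-r+1} ≤ d` and `s_{d-r+2} > d`. -/
theorem stmt4 (d r : ℕ) (f : ℕ → ℕ) (hr : 0 < r) (hrd : r ≤ d)
    (hmono : ∀ i j, i ≤ j → f j ≤ f i)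
    (hht : ∀ i, r - 1 ≤ i → f i = 0)
    (hwidth : f 0 ≤ d - r + 1) :
    (∑ i ∈ Finset.range r, staircase r f (d - r + 1) i) -
        (∑ i ∈ Finset.range r, f i) ≤ d ∧
      d < (∑ i ∈ Finset.range r, staircase r f (d - r + 2) i) -
        (∑ i ∈ Finset.range r, f i) := by
  obtain ⟨r, rfl⟩ := Nat.exists_eq_add_one_of_ne_zero hr.ne'
  have hf : Antitone f := hmono
  have hfr : f r = 0 := hht r (by omega)
  have hle := sum_staircase_succ_le hf hfr (n := d - (r + 1)) hwidth
  have heq := sum_staircase_succ_eq hf hfr (n := d - (r + 1) + 1) hwidth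
  rw [add_assoc, one_add_one_eq_two] at heq
  constructor <;> omega
end
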